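/- Let Q be the quiver with vertices 0,1,2,3 and arrows δ: 0→1, α,β: 1→2, γ: 2→3, and let I = ⟨δ(α−β), (α−β)γ⟩. Then the presentation (Q,I) is neither left nor right compatible: there is no choice of path u([e_1],[δβ]) satisfying the right compatibility condition, and no choice of v([e_2],[βγ]) satisfying the left compatibility condition. -/

import Mathlib

open Quiver

universe v u

/-- The type of all paths in the quiver `V`, together with their endpoints. -/
abbrev PathsIn (V : Type u) [Quiver.{v} V] : Type (max u v) :=
  Σ x y : V, Quiver.Path x y

variable (k : Type*) [Field k] (V : Type u) [Quiver.{v} V]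

/-- The underlying vector space of the path algebra: the free `k`-module on paths. -/
abbrev PathVec := (PathsIn V) →₀ k

/-- The length of a path. -/
def pathLen (p : PathsIn V) : ℕ := p.2.2.length

/-- Composition of composable paths. -/
def pcomp (p q : PathsIn V) (h : p.2.1 = q.1) : PathsIn V :=
  ⟨p.1, q.2.1, p.2.2.comp (h.symm ▸ q.2.2)⟩

open scoped Classical in
/-- Multiplication `u ρ w` of an element `ρ` of the path algebra by paths `u`, `w`. -/
noncomputable def pmul (u : PathsIn V) (ρ : PathVec k V) (w : PathsIn V) : PathVec k V :=
  ρ.sum fun p c => if h : u.2.1 = p.1 ∧ p.2.1 = w.1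
    then Finsupp.single (pcomp V (pcomp V u p h.1) w h.2) c else 0

/-- The two-sided ideal of the path algebra generated by a set `S`. -/
noncomputable def idealGen (S : Set (PathVec k V)) : Submodule k (PathVec k V) :=
  Submodule.span k {x | ∃ u ρ w, ρ ∈ S ∧ x = pmul k V u ρ w}

open scoped Classical in
/-- A minimal relation: an element of `I`, with all paths in its support parallel,
such that no proper nonempty subsum lies in `I`. -/
def IsMinimalRelation (I : Submodule k (PathVec k V)) (ρ : PathVec k V) : Prop :=
  ρ ∈ I ∧ (∃ x y : V, ∀ p ∈ ρ.support, p.1 = x ∧ p.2.1 = y) ∧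
    ∀ J : Finset (PathsIn V), J ⊆ ρ.support → J.Nonempty → J ≠ ρ.support →
      ρ.filter (· ∈ J) ∉ I

/-- The homotopy relation `∼` on paths: the smallest equivalence relation such that
paths appearing in a minimal relation are equivalent, compatible with two-sided
composition. -/
inductive HRel (I : Submodule k (PathVec k V)) : PathsIn V → PathsIn V → Prop
  | of (ρ : PathVec k V) (hρ : IsMinimalRelation k V I ρ) (p q : PathsIn V)
      (hp : p ∈ ρ.support) (hq : q ∈ ρ.support) : HRel I p q
  | refl (p : PathsIn V) : HRel I p p
  | symm {p q} : HRel I p q → HRel I q p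
  | trans {p q r} : HRel I p q → HRel I q r → HRel I p r
  | compat (a x y b : V) (u v : Quiver.Path x y) (w : Quiver.Path a x) (w' : Quiver.Path y b) :
      HRel I ⟨x, y, u⟩ ⟨x, y, v⟩ →
      HRel I ⟨a, b, (w.comp u).comp w'⟩ ⟨a, b, (w.comp v).comp w'⟩

/-- A path lies in `I` (i.e. is zero in `A = kQ/I`). -/
def memI (I : Submodule k (PathVec k V)) (p : PathsIn V) : Prop :=
  (Finsupp.single p 1 : PathVec k V) ∈ I

/-- The span of paths of length at least `m` (the `m`-th power of the arrow ideal). -/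
noncomputable def arrowPow (m : ℕ) : Submodule k (PathVec k V) :=
  Submodule.span k {x | ∃ p : PathsIn V, m ≤ pathLen V p ∧ x = Finsupp.single p 1}

/-- The ideal `I` is admissible: `F^m ⊆ I ⊆ F^2` for some `m ≥ 2`. -/
def IsAdmissible (I : Submodule k (PathVec k V)) : Prop :=
  (∃ m, 2 ≤ m ∧ arrowPow k V m ≤ I) ∧ I ≤ arrowPow k V 2

/-- Homotopy coherence of a presentation. -/
def HomotopyCoherent (I : Submodule k (PathVec k V)) : Prop :=
  ∀ p q, HRel k V I p q → (memI k V I p ↔ memI k V I q)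

/-- A path represents a class in `Σ_ν`: no path equivalent to it lies in `I`. -/
def SigmaClass (I : Submodule k (PathVec k V)) (p : PathsIn V) : Prop :=
  ∀ q, HRel k V I p q → ¬ memI k V I q

/-- The poset `Σ_ν`: equivalence classes (under `∼`) of paths not equivalent to any
path in `I`. -/
def SigmaNu (I : Submodule k (PathVec k V)) :=
  Quot (fun a b : {p : PathsIn V // SigmaClass k V I p} => HRel k V I a.1 b.1)

/-- The relation `[w] ≥ [w']` on `Σ_ν`: `[w'] = [u][w][v]` for some classes
`[u], [v] ∈ Σ_ν`. -/
def geSigmaNu (I : Submodule k (PathVec k V)) (s s' : SigmaNu k V I) : Prop :=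
  ∃ (p q u v : PathsIn V) (hp : SigmaClass k V I p) (hq : SigmaClass k V I q),
    SigmaClass k V I u ∧ SigmaClass k V I v ∧
    s = Quot.mk _ ⟨p, hp⟩ ∧ s' = Quot.mk _ ⟨q, hq⟩ ∧
    ∃ (h1 : u.2.1 = p.1) (h2 : p.2.1 = v.1),
      HRel k V I q (pcomp V (pcomp V u p h1) v h2)

/-- A right compatible presentation: a choice of a path `u s s'` for each pair
`s > s'` in `Σ_ν` such that `s' = [v] s [u s s']` and
`u s s'' ∼ (u s s') (u s' s'')` for chains `s > s' > s''`. -/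
structure RightCompat (I : Submodule k (PathVec k V)) where
  /-- The chosen path `u(s, s')`. -/
  u : ∀ s s' : SigmaNu k V I, geSigmaNu k V I s s' → s ≠ s' → PathsIn V
  /-- Condition (i): `s' = [v] s [u(s, s')]`. -/
  spec : ∀ s s' (h : geSigmaNu k V I s s') (hne : s ≠ s'),
    ∃ (p v : PathsIn V) (hp : SigmaClass k V I p), SigmaClass k V I v ∧
      s = Quot.mk _ ⟨p, hp⟩ ∧
      ∃ (h1 : v.2.1 = p.1) (h2 : p.2.1 = (u s s' h hne).1)
        (hc : SigmaClass k V I (pcomp V (pcomp V v p h1) (u s s' h hne) h2)),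
        s' = Quot.mk _ ⟨pcomp V (pcomp V v p h1) (u s s' h hne) h2, hc⟩
  /-- Condition (ii): `u(s, s'') ∼ u(s, s') u(s', s'')` for `s > s' > s''`. -/
  coh : ∀ s s' s'' (h1 : geSigmaNu k V I s s') (hne1 : s ≠ s')
      (h2 : geSigmaNu k V I s' s'') (hne2 : s' ≠ s'')
      (h3 : geSigmaNu k V I s s'') (hne3 : s ≠ s''),
    ∃ hc : (u s s' h1 hne1).2.1 = (u s' s'' h2 hne2).1,
      HRel k V I (u s s'' h3 hne3) (pcomp V (u s s' h1 hne1) (u s' s'' h2 hne2) hc)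


/-- A left compatible presentation: the dual of `RightCompat`, with the chosen paths
composed on the left: `s' = [v s s'] s [u]` and `v s s'' ∼ (v s' s'') (v s s')`. -/
structure LeftCompat (I : Submodule k (PathVec k V)) where
  /-- The chosen path `v(s, s')`. -/
  v : ∀ s s' : SigmaNu k V I, geSigmaNu k V I s s' → s ≠ s' → PathsIn V
  /-- Condition (i): `s' = [v(s, s')] s [u]`. -/
  spec : ∀ s s' (h : geSigmaNu k V I s s') (hne : s ≠ s'),
    ∃ (p u : PathsIn V) (hp : SigmaClass k V I p), SigmaClass k V I u ∧
      s = Quot.mk _ ⟨p, hp⟩ ∧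
      ∃ (h1 : (v s s' h hne).2.1 = p.1) (h2 : p.2.1 = u.1)
        (hc : SigmaClass k V I (pcomp V (pcomp V (v s s' h hne) p h1) u h2)),
        s' = Quot.mk _ ⟨pcomp V (pcomp V (v s s' h hne) p h1) u h2, hc⟩
  /-- Condition (ii): `v(s, s'') ∼ v(s', s'') v(s, s')` for `s > s' > s''`. -/
  coh : ∀ s s' s'' (h1 : geSigmaNu k V I s s') (hne1 : s ≠ s')
      (h2 : geSigmaNu k V I s' s'') (hne2 : s' ≠ s'')
      (h3 : geSigmaNu k V I s s'') (hne3 : s ≠ s''),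
    ∃ hc : (v s' s'' h2 hne2).2.1 = (v s s' h1 hne1).1,
      HRel k V I (v s s'' h3 hne3) (pcomp V (v s' s'' h2 hne2) (v s s' h1 hne1) hc)

/-- The vertices `0, 1, 2, 3` of the quiver of Statement 19. -/
inductive V4 : Type
  | v0 | v1 | v2 | v3

/-- The arrows `δ : 0 → 1`, `α β : 1 → 2`, `γ : 2 → 3`. -/
inductive V4.Arr : V4 → V4 → Type
  | δ : V4.Arr .v0 .v1
  | α : V4.Arr .v1 .v2
  | β : V4.Arr .v1 .v2
  | γ : V4.Arr .v2 .v3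

instance : Quiver.{0} V4 := ⟨V4.Arr⟩

open V4 in
/-- The path `δα`. -/
def pδα : PathsIn V4 := ⟨V4.v0, V4.v2, (Quiver.Path.nil.cons V4.Arr.δ).cons V4.Arr.α⟩
/-- The path `δβ`. -/
def pδβ : PathsIn V4 := ⟨V4.v0, V4.v2, (Quiver.Path.nil.cons V4.Arr.δ).cons V4.Arr.β⟩
/-- The path `αγ`. -/
def pαγ : PathsIn V4 := ⟨V4.v1, V4.v3, (Quiver.Path.nil.cons V4.Arr.α).cons V4.Arr.γ⟩
/-- The path `βγ`. -/
def pβγ : PathsIn V4 := ⟨V4.v1, V4.v3, (Quiver.Path.nil.cons V4.Arr.β).cons V4.Arr.γ⟩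

/-- The ideal `I = ⟨δ(α−β), (α−β)γ⟩`. -/
noncomputable def I19 : Submodule k (PathVec k V4) :=
  idealGen k V4
    {(Finsupp.single pδα 1 - Finsupp.single pδβ 1 : PathVec k V4),
     (Finsupp.single pαγ 1 - Finsupp.single pβγ 1 : PathVec k V4)}

/-!
`I` is spanned by differences of parallel paths of length at least two. Hence `I` lies in the
kernel of the augmentation (sum of coefficients), so no path lies in `I`, every path gives a class
of `Σ`, and `δα ∼ δβ`, `αγ ∼ βγ` are minimal relations; and `I ⊆ F²`, so `∼` identifies no two
distinct paths of length less than two, in particular `α ≁ β`.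

As `Q` has no oriented cycles, condition (i) of right compatibility forces `u([e₁], [a]) ∼ a`
for an arrow `a : 1 → 2`, and `u([a], [δα]) = e₂`. Condition (ii) along the chains
`[e₁] > [α] > [δα]` and `[e₁] > [β] > [δβ] = [δα]` then gives `α ∼ u([e₁], [δα]) ∼ β`.
Dually, left compatibility along `[e₂] > [α] > [αγ]` and `[e₂] > [β] > [βγ] = [αγ]` gives `α ∼ β`.
-/

section

variable {k V}

theorem pathLen_pcomp (p q : PathsIn V) (h : p.2.1 = q.1) :
    pathLen V (pcomp V p q h) = pathLen V p + pathLen V q := by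
  obtain ⟨x, y, p⟩ := p
  obtain ⟨y', z, q⟩ := q
  obtain rfl : y = y' := h
  exact Path.length_comp p q

theorem pathLen_le_pathLen_pcomp_pcomp (u p w : PathsIn V) (h₁ : u.2.1 = p.1)
    (h₂ : (pcomp V u p h₁).2.1 = w.1) :
    pathLen V p ≤ pathLen V (pcomp V (pcomp V u p h₁) w h₂) := by
  rw [pathLen_pcomp, pathLen_pcomp]
  omega

theorem pcomp_eq_right_of_pathLen_eq_zero {p : PathsIn V} (q : PathsIn V) (h : p.2.1 = q.1)
    (hp : pathLen V p = 0) : pcomp V p q h = q := by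
  obtain ⟨x, y, p⟩ := p
  obtain ⟨y', z, q⟩ := q
  obtain rfl : y = y' := h
  obtain rfl := Path.eq_of_length_zero p hp
  obtain rfl := Path.eq_nil_of_length_zero p hp
  simp [pcomp]

theorem pcomp_eq_left_of_pathLen_eq_zero (p : PathsIn V) {q : PathsIn V} (h : p.2.1 = q.1)
    (hq : pathLen V q = 0) : pcomp V p q h = p := by
  obtain ⟨x, y, p⟩ := p
  obtain ⟨y', z, q⟩ := q
  obtain rfl : y = y' := h
  obtain rfl := Path.eq_of_length_zero q hq
  obtain rfl := Path.eq_nil_of_length_zero q hq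
  rfl

theorem Quiver.Path.rank_add_length_le (r : V → ℕ) (hr : ∀ {a b : V}, (a ⟶ b) → r a < r b)
    {x y : V} (p : Path x y) : r x + p.length ≤ r y := by
  induction p with
  | nil => simp
  | cons p e ih => simp only [Path.length_cons]; have := hr e; omega

open scoped Classical in
theorem pmul_single (u p w : PathsIn V) (c : k) :
    pmul k V u (Finsupp.single p c) w =
      if h : u.2.1 = p.1 ∧ p.2.1 = w.1
        then Finsupp.single (pcomp V (pcomp V u p h.1) w h.2) c else 0 := by
  unfold pmul
  rw [Finsupp.sum_single_index]
  all_goals split <;> simp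

theorem pmul_sub (u : PathsIn V) (x y : PathVec k V) (w : PathsIn V) :
    pmul k V u (x - y) w = pmul k V u x w - pmul k V u y w := by
  classical
  unfold pmul
  apply Finsupp.sum_sub_index
  intro p b1 b2
  split <;> simp [Finsupp.single_sub]

variable (k V) in
def parallelBinomials (m : ℕ) : Set (PathVec k V) :=
  {x | ∃ p q : PathsIn V, p.1 = q.1 ∧ p.2.1 = q.2.1 ∧ m ≤ pathLen V p ∧
    m ≤ pathLen V q ∧ x = Finsupp.single p 1 - Finsupp.single q 1}

open scoped Classical in
theorem pmul_sub_of_parallel (u w : PathsIn V) {p q : PathsIn V} (hx : p.1 = q.1)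
    (hy : p.2.1 = q.2.1) :
    pmul k V u (Finsupp.single p 1 - Finsupp.single q 1) w =
      if h : u.2.1 = p.1 ∧ p.2.1 = w.1 then
        Finsupp.single (pcomp V (pcomp V u p h.1) w h.2) 1 -
          Finsupp.single (pcomp V (pcomp V u q (h.1.trans hx)) w (hy ▸ h.2)) 1
      else 0 := by
  rw [pmul_sub, pmul_single, pmul_single]
  by_cases h : u.2.1 = p.1 ∧ p.2.1 = w.1
  · rw [dif_pos h, dif_pos ⟨h.1.trans hx, hy ▸ h.2⟩, dif_pos h]
  · rw [dif_neg h, dif_neg (fun h' => h ⟨h'.1.trans hx.symm, hy ▸ h'.2⟩), dif_neg h,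
      sub_zero]

theorem pcomp_nil_pcomp_nil {x y : V} (p : Path x y) (h₁ h₂) :
    pcomp V (pcomp V ⟨x, x, .nil⟩ ⟨x, y, p⟩ h₁) ⟨y, y, .nil⟩ h₂ = ⟨x, y, p⟩ := by
  show (⟨x, y, (Path.nil.comp p).comp .nil⟩ : PathsIn V) = _
  simp

theorem sub_mem_idealGen {S : Set (PathVec k V)} {x y : V} (p q : Path x y)
    (hS : Finsupp.single ⟨x, y, p⟩ 1 - Finsupp.single ⟨x, y, q⟩ 1 ∈ S) :
    Finsupp.single ⟨x, y, p⟩ 1 - Finsupp.single ⟨x, y, q⟩ 1 ∈ idealGen k V S := by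
  refine Submodule.subset_span ⟨⟨x, x, .nil⟩, _, ⟨y, y, .nil⟩, hS, ?_⟩
  rw [pmul_sub, pmul_single, pmul_single, dif_pos ⟨rfl, rfl⟩, dif_pos ⟨rfl, rfl⟩,
    pcomp_nil_pcomp_nil p rfl rfl, pcomp_nil_pcomp_nil q rfl rfl]

theorem idealGen_le_span_parallelBinomials {S : Set (PathVec k V)} {m : ℕ}
    (hS : S ⊆ parallelBinomials k V m) :
    idealGen k V S ≤ Submodule.span k (parallelBinomials k V m) := by
  refine Submodule.span_le.mpr ?_
  rintro _ ⟨u, _, w, hρ, rfl⟩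
  obtain ⟨p, q, hx, hy, hp, hq, rfl⟩ := hS hρ
  rw [pmul_sub_of_parallel u w hx hy]
  split_ifs with h
  · refine Submodule.subset_span ⟨_, _, ?_, ?_, ?_, ?_, rfl⟩
    · rfl
    · rfl
    · exact hp.trans (pathLen_le_pathLen_pcomp_pcomp _ _ _ _ _)
    · exact hq.trans (pathLen_le_pathLen_pcomp_pcomp _ _ _ _ _)
  · exact Submodule.zero_mem _

variable (k V) in
noncomputable def augmentation : PathVec k V →ₗ[k] k :=
  Finsupp.linearCombination k fun _ => 1

@[simp]
theorem augmentation_single (p : PathsIn V) (c : k) :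
    augmentation k V (Finsupp.single p c) = c := by
  simp [augmentation]

theorem span_parallelBinomials_le_ker_augmentation (m : ℕ) :
    Submodule.span k (parallelBinomials k V m) ≤ LinearMap.ker (augmentation k V) := by
  refine Submodule.span_le.mpr ?_
  rintro _ ⟨p, q, -, -, -, -, rfl⟩
  simp

theorem span_parallelBinomials_le_arrowPow (m : ℕ) :
    Submodule.span k (parallelBinomials k V m) ≤ arrowPow k V m := by
  refine Submodule.span_le.mpr ?_
  rintro _ ⟨p, q, -, -, hp, hq, rfl⟩
  exact sub_mem (Submodule.subset_span ⟨p, hp, rfl⟩) (Submodule.subset_span ⟨q, hq, rfl⟩)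

theorem arrowPow_le_supported (m : ℕ) :
    arrowPow k V m ≤ Finsupp.supported k k {p | m ≤ pathLen V p} := by
  refine Submodule.span_le.mpr ?_
  rintro _ ⟨p, hp, rfl⟩
  exact Finsupp.single_mem_supported k 1 hp

theorem Finsupp.support_single_one_sub_single_one {α : Type*} [DecidableEq α] {a b : α}
    (h : a ≠ b) : (Finsupp.single a (1 : k) - Finsupp.single b 1).support = {a, b} := by
  ext t
  by_cases ha : t = a <;> by_cases hb : t = b <;>
    simp_all [Finsupp.single_apply, eq_comm]

theorem augmentation_filter_single (P : PathsIn V → Prop) [DecidablePred P] (p : PathsIn V) :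
    augmentation k V ((Finsupp.single p 1).filter P) = if P p then 1 else 0 := by
  split_ifs with h
  · rw [Finsupp.filter_single_of_pos _ h, augmentation_single]
  · rw [Finsupp.filter_single_of_neg _ h, map_zero]

section Homotopy

variable {I : Submodule k (PathVec k V)}

theorem not_memI_of_le_ker_augmentation (hI : I ≤ LinearMap.ker (augmentation k V))
    (p : PathsIn V) : ¬ memI k V I p := fun hp => by
  simpa using hI hp

theorem sigmaClass_of_le_ker_augmentation (hI : I ≤ LinearMap.ker (augmentation k V))
    (p : PathsIn V) : SigmaClass k V I p :=
  fun q _ => not_memI_of_le_ker_augmentation hI q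

theorem HRel.endpoints_eq {p q : PathsIn V} (h : HRel k V I p q) :
    p.1 = q.1 ∧ p.2.1 = q.2.1 := by
  induction h with
  | of ρ hρ p q hp hq =>
    obtain ⟨x, y, hxy⟩ := hρ.2.1
    exact ⟨(hxy p hp).1.trans (hxy q hq).1.symm, (hxy p hp).2.trans (hxy q hq).2.symm⟩
  | refl => exact ⟨rfl, rfl⟩
  | symm _ ih => exact ⟨ih.1.symm, ih.2.symm⟩
  | trans _ _ ih₁ ih₂ => exact ⟨ih₁.1.trans ih₂.1, ih₁.2.trans ih₂.2⟩
  | compat => exact ⟨rfl, rfl⟩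

theorem HRel.eq_or_two_le_pathLen (hI : I ≤ arrowPow k V 2) {p q : PathsIn V}
    (h : HRel k V I p q) : p = q ∨ 2 ≤ pathLen V p ∧ 2 ≤ pathLen V q := by
  induction h with
  | of ρ hρ p q hp hq =>
    have hsupp := (Finsupp.mem_supported k ρ).mp (arrowPow_le_supported 2 (hI hρ.1))
    exact .inr ⟨hsupp hp, hsupp hq⟩
  | refl => exact .inl rfl
  | symm _ ih => exact ih.imp Eq.symm And.symm
  | trans _ _ ih₁ ih₂ =>
    rcases ih₁ with rfl | ⟨hp, hq⟩
    · exact ih₂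
    · rcases ih₂ with rfl | ⟨-, hr⟩
      exacts [.inr ⟨hp, hq⟩, .inr ⟨hp, hr⟩]
  | compat a x y b u v w w' _ ih =>
    rcases ih with huv | ⟨hu, hv⟩
    · obtain rfl : u = v := by simpa using huv
      exact .inl rfl
    · refine .inr ⟨?_, ?_⟩ <;> simp only [pathLen, Path.length_comp] at hu hv ⊢ <;> omega

theorem HRel.of_sub_mem (hI : I ≤ LinearMap.ker (augmentation k V)) {x y : V} (p q : Path x y)
    (hpq : Finsupp.single ⟨x, y, p⟩ 1 - Finsupp.single ⟨x, y, q⟩ 1 ∈ I) :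
    HRel k V I ⟨x, y, p⟩ ⟨x, y, q⟩ := by
  classical
  by_cases hne : p = q
  · subst hne
    exact .refl _
  have hne' : (⟨x, y, p⟩ : PathsIn V) ≠ ⟨x, y, q⟩ := by simpa using hne
  have hsupp := Finsupp.support_single_one_sub_single_one (k := k) hne'
  refine .of _ ⟨hpq, ⟨x, y, ?_⟩, ?_⟩ _ _ (by simp [hsupp]) (by simp [hsupp])
  · intro r hr
    rw [hsupp, Finset.mem_insert, Finset.mem_singleton] at hr
    rcases hr with rfl | rfl <;> exact ⟨rfl, rfl⟩
  -- a proper nonempty part of the support is a single path, of augmentation `±1`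
  · intro J hJ hJne hJsupp hmem
    have := hI hmem
    rw [hsupp] at hJ hJsupp
    simp only [LinearMap.mem_ker, Finsupp.filter_sub, map_sub, augmentation_filter_single] at this
    obtain ⟨t, ht⟩ := hJne
    split_ifs at this with hp hq <;> norm_num at this
    · exact hJsupp (Finset.Subset.antisymm hJ (by simp [Finset.insert_subset_iff, hp, hq]))
    · have := hJ ht
      simp only [Finset.mem_insert, Finset.mem_singleton] at this
      rcases this with rfl | rfl <;> contradiction

theorem SigmaNu.hRel_of_mk_eq {p q : PathsIn V} {hp : SigmaClass k V I p}
    {hq : SigmaClass k V I q}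
    (h : (Quot.mk _ ⟨p, hp⟩ : SigmaNu k V I) = Quot.mk _ ⟨q, hq⟩) :
    HRel k V I p q :=
  (Equivalence.eqvGen_iff (r := fun a b : {p // SigmaClass k V I p} => HRel k V I a.1 b.1)
    ⟨fun _ => HRel.refl _, HRel.symm, HRel.trans⟩).mp
    (Quot.eqvGen_exact h)

theorem geSigmaNu_mk (hI : ∀ p, SigmaClass k V I p) {p q : PathsIn V} (u w : PathsIn V)
    (h₁ : u.2.1 = p.1) (h₂ : (pcomp V u p h₁).2.1 = w.1)
    (hq : HRel k V I q (pcomp V (pcomp V u p h₁) w h₂)) :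
    geSigmaNu k V I (Quot.mk _ ⟨p, hI p⟩) (Quot.mk _ ⟨q, hI q⟩) :=
  ⟨p, q, u, w, hI p, hI q, hI u, hI w, rfl, rfl, h₁, h₂, hq⟩

theorem SigmaNu.mk_ne_mk (hI : I ≤ arrowPow k V 2) {p q : PathsIn V}
    {hp : SigmaClass k V I p} {hq : SigmaClass k V I q} (hlt : pathLen V p < 2)
    (hne : pathLen V p ≠ pathLen V q) :
    (Quot.mk _ ⟨p, hp⟩ : SigmaNu k V I) ≠ Quot.mk _ ⟨q, hq⟩ := fun h => by
  rcases (hRel_of_mk_eq h).eq_or_two_le_pathLen hI with rfl | ⟨hp2, -⟩ <;> omega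

end Homotopy

section Acyclic

variable {I : Submodule k (PathVec k V)}
  (hacyc : ∀ p : PathsIn V, p.1 = p.2.1 → pathLen V p = 0)

include hacyc in
theorem HRel.pathLen_eq_zero {p₀ p : PathsIn V} (h : HRel k V I p₀ p)
    (hp₀ : pathLen V p₀ = 0) : pathLen V p = 0 :=
  hacyc p <| calc
    p.1 = p₀.1 := h.endpoints_eq.1.symm
    _ = p₀.2.1 := Path.eq_of_length_zero p₀.2.2 hp₀
    _ = p.2.1 := h.endpoints_eq.2

section Condition

variable {s s' : SigmaNu k V I} (h : geSigmaNu k V I s s') (hne : s ≠ s') {p₀ q : PathsIn V}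
  {hp₀ : SigmaClass k V I p₀} {hq : SigmaClass k V I q}
  (hs : s = Quot.mk _ ⟨p₀, hp₀⟩) (hs' : s' = Quot.mk _ ⟨q, hq⟩)
include hacyc hs hs'

theorem RightCompat.hRel_u_of_pathLen_eq_zero (rc : RightCompat k V I)
    (hp₀ : pathLen V p₀ = 0) (hpq : p₀.1 = q.1) : HRel k V I (rc.u s s' h hne) q := by
  obtain ⟨p, v, _, _, hsp, h₁, h₂, _, hs'vpu⟩ := rc.spec s s' h hne
  have hp := SigmaNu.hRel_of_mk_eq (hs.symm.trans hsp)
  have hvpu := SigmaNu.hRel_of_mk_eq (hs'.symm.trans hs'vpu)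
  have hp_len : pathLen V p = 0 := hp.pathLen_eq_zero hacyc hp₀
  have hv_len : pathLen V v = 0 := hacyc v <| calc
    v.1 = q.1 := hvpu.endpoints_eq.1.symm
    _ = p₀.1 := hpq.symm
    _ = p.1 := hp.endpoints_eq.1
    _ = v.2.1 := h₁.symm
  have hvpu_eq : pcomp V (pcomp V v p h₁) (rc.u s s' h hne) h₂ = rc.u s s' h hne :=
    pcomp_eq_right_of_pathLen_eq_zero _ _ (by rw [pathLen_pcomp, hv_len, hp_len])
  exact hvpu_eq ▸ hvpu.symm

theorem RightCompat.pathLen_u_eq_zero (rc : RightCompat k V I) (hpq : p₀.2.1 = q.2.1) :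
    pathLen V (rc.u s s' h hne) = 0 := by
  obtain ⟨p, v, _, _, hsp, h₁, h₂, _, hs'vpu⟩ := rc.spec s s' h hne
  refine hacyc _ <| calc
    _ = p.2.1 := h₂.symm
    _ = p₀.2.1 := (SigmaNu.hRel_of_mk_eq (hs.symm.trans hsp)).endpoints_eq.2.symm
    _ = q.2.1 := hpq
    _ = _ := (SigmaNu.hRel_of_mk_eq (hs'.symm.trans hs'vpu)).endpoints_eq.2

theorem LeftCompat.hRel_v_of_pathLen_eq_zero (lc : LeftCompat k V I)
    (hp₀ : pathLen V p₀ = 0) (hpq : p₀.2.1 = q.2.1) : HRel k V I (lc.v s s' h hne) q := by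
  obtain ⟨p, u, _, _, hsp, h₁, h₂, _, hs'vpu⟩ := lc.spec s s' h hne
  have hp := SigmaNu.hRel_of_mk_eq (hs.symm.trans hsp)
  have hvpu := SigmaNu.hRel_of_mk_eq (hs'.symm.trans hs'vpu)
  have hp_len : pathLen V p = 0 := hp.pathLen_eq_zero hacyc hp₀
  have hu_len : pathLen V u = 0 := hacyc u <| calc
    u.1 = p.2.1 := h₂.symm
    _ = p₀.2.1 := hp.endpoints_eq.2.symm
    _ = q.2.1 := hpq
    _ = u.2.1 := hvpu.endpoints_eq.2
  have hvpu_eq : pcomp V (pcomp V (lc.v s s' h hne) p h₁) u h₂ = lc.v s s' h hne :=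
    (pcomp_eq_left_of_pathLen_eq_zero (pcomp V _ p h₁) h₂ hu_len).trans
      (pcomp_eq_left_of_pathLen_eq_zero _ h₁ hp_len)
  exact hvpu_eq ▸ hvpu.symm

theorem LeftCompat.pathLen_v_eq_zero (lc : LeftCompat k V I) (hpq : p₀.1 = q.1) :
    pathLen V (lc.v s s' h hne) = 0 := by
  obtain ⟨p, u, _, _, hsp, h₁, h₂, _, hs'vpu⟩ := lc.spec s s' h hne
  refine hacyc _ <| calc
    _ = q.1 := (SigmaNu.hRel_of_mk_eq (hs'.symm.trans hs'vpu)).endpoints_eq.1.symm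
    _ = p₀.1 := hpq.symm
    _ = p.1 := (SigmaNu.hRel_of_mk_eq (hs.symm.trans hsp)).endpoints_eq.1
    _ = _ := h₁.symm

end Condition

section Chain

variable {s t r : SigmaNu k V I} (h₁ : geSigmaNu k V I s t) (hne₁ : s ≠ t)
  (h₂ : geSigmaNu k V I t r) (hne₂ : t ≠ r) (h₃ : geSigmaNu k V I s r) (hne₃ : s ≠ r)
  {e a c : PathsIn V} {he : SigmaClass k V I e} {ha : SigmaClass k V I a}
  {hc : SigmaClass k V I c} (hs : s = Quot.mk _ ⟨e, he⟩) (ht : t = Quot.mk _ ⟨a, ha⟩)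
  (hr : r = Quot.mk _ ⟨c, hc⟩) (he₀ : pathLen V e = 0)
include hacyc h₁ hne₁ h₂ hne₂ hs ht hr he₀

theorem RightCompat.hRel_u_of_chain (rc : RightCompat k V I) (hea : e.1 = a.1)
    (hac : a.2.1 = c.2.1) : HRel k V I (rc.u s r h₃ hne₃) a := by
  obtain ⟨_, hcoh⟩ := rc.coh s t r h₁ hne₁ h₂ hne₂ h₃ hne₃
  rw [pcomp_eq_left_of_pathLen_eq_zero _ _
    (rc.pathLen_u_eq_zero hacyc h₂ hne₂ ht hr hac)] at hcoh
  exact hcoh.trans (rc.hRel_u_of_pathLen_eq_zero hacyc h₁ hne₁ hs ht he₀ hea)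

theorem LeftCompat.hRel_v_of_chain (lc : LeftCompat k V I) (hea : e.2.1 = a.2.1)
    (hac : a.1 = c.1) : HRel k V I (lc.v s r h₃ hne₃) a := by
  obtain ⟨_, hcoh⟩ := lc.coh s t r h₁ hne₁ h₂ hne₂ h₃ hne₃
  rw [pcomp_eq_right_of_pathLen_eq_zero _ _
    (lc.pathLen_v_eq_zero hacyc h₂ hne₂ ht hr hac)] at hcoh
  exact hcoh.trans (lc.hRel_v_of_pathLen_eq_zero hacyc h₁ hne₁ hs ht he₀ hea)

end Chain

end Acyclic

end

namespace V4

def rank : V4 → ℕ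
  | v0 => 0
  | v1 => 1
  | v2 => 2
  | v3 => 3

theorem rank_lt_rank {a b : V4} (e : a ⟶ b) : rank a < rank b := by
  change Arr a b at e
  cases e <;> decide

theorem pathLen_eq_zero_of_fst_eq_snd (p : PathsIn V4) (hp : p.1 = p.2.1) : pathLen V4 p = 0 := by
  obtain ⟨x, y, p⟩ := p
  obtain rfl : x = y := hp
  have := Path.rank_add_length_le rank rank_lt_rank p
  simp only [pathLen]
  omega

abbrev e₁ : PathsIn V4 := ⟨v1, v1, .nil⟩
abbrev e₂ : PathsIn V4 := ⟨v2, v2, .nil⟩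
abbrev pδ : PathsIn V4 := ⟨v0, v1, Path.nil.cons Arr.δ⟩
abbrev pγ : PathsIn V4 := ⟨v2, v3, Path.nil.cons Arr.γ⟩
abbrev arrowPath (e : Arr v1 v2) : PathsIn V4 := ⟨v1, v2, Path.nil.cons e⟩

theorem I19_le_span_parallelBinomials :
    I19 k ≤ Submodule.span k (parallelBinomials k V4 2) := by
  refine idealGen_le_span_parallelBinomials ?_
  rintro _ (rfl | rfl)
  exacts [⟨pδα, pδβ, rfl, rfl, by decide, by decide, rfl⟩,
    ⟨pαγ, pβγ, rfl, rfl, by decide, by decide, rfl⟩]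

theorem I19_le_ker_augmentation : I19 k ≤ LinearMap.ker (augmentation k V4) :=
  (I19_le_span_parallelBinomials k).trans (span_parallelBinomials_le_ker_augmentation 2)

theorem I19_le_arrowPow : I19 k ≤ arrowPow k V4 2 :=
  (I19_le_span_parallelBinomials k).trans (span_parallelBinomials_le_arrowPow 2)

theorem hRel_pδα_pδβ : HRel k V4 (I19 k) pδα pδβ :=
  .of_sub_mem (I19_le_ker_augmentation k) _ _ (sub_mem_idealGen _ _ (.inl rfl))

theorem hRel_pαγ_pβγ : HRel k V4 (I19 k) pαγ pβγ :=
  .of_sub_mem (I19_le_ker_augmentation k) _ _ (sub_mem_idealGen _ _ (.inr rfl))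

theorem not_hRel_α_β : ¬ HRel k V4 (I19 k) (arrowPath .α) (arrowPath .β) := fun h => by
  rcases h.eq_or_two_le_pathLen (I19_le_arrowPow k) with h | ⟨h, -⟩
  · simp at h
  · exact absurd h (by decide)

abbrev cls (p : PathsIn V4) : SigmaNu k V4 (I19 k) :=
  Quot.mk _ ⟨p, sigmaClass_of_le_ker_augmentation (I19_le_ker_augmentation k) p⟩

theorem cls_ne_cls {p q : PathsIn V4} (hp : pathLen V4 p < 2)
    (hpq : pathLen V4 p ≠ pathLen V4 q) : cls k p ≠ cls k q :=
  SigmaNu.mk_ne_mk (I19_le_arrowPow k) hp hpq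

theorem hRel_α_of_rightCompat (rc : RightCompat k V4 (I19 k)) (a : Arr v1 v2)
    (ha : HRel k V4 (I19 k) pδα ⟨v0, v2, (Path.nil.cons Arr.δ).cons a⟩) :
    HRel k V4 (I19 k) (arrowPath .α) (arrowPath a) := by
  have h₃ : geSigmaNu k V4 (I19 k) (cls k e₁) (cls k pδα) :=
    geSigmaNu_mk _ pδ (arrowPath .α) rfl rfl (.refl _)
  have hne₃ : cls k e₁ ≠ cls k pδα := cls_ne_cls k (by decide) (by decide)
  have hchain (b : Arr v1 v2)
      (hb : HRel k V4 (I19 k) pδα ⟨v0, v2, (Path.nil.cons Arr.δ).cons b⟩) :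
      HRel k V4 (I19 k) (rc.u _ _ h₃ hne₃) (arrowPath b) := by
    have h₁ : geSigmaNu k V4 (I19 k) (cls k e₁) (cls k (arrowPath b)) :=
      geSigmaNu_mk _ e₁ (arrowPath b) rfl rfl (.refl _)
    have h₂ : geSigmaNu k V4 (I19 k) (cls k (arrowPath b)) (cls k pδα) :=
      geSigmaNu_mk _ pδ e₂ rfl rfl hb
    exact rc.hRel_u_of_chain pathLen_eq_zero_of_fst_eq_snd
      h₁ (cls_ne_cls k (by decide) (by simp [pathLen]))
      h₂ (cls_ne_cls k (by simp [pathLen]) (by simp [pathLen, pδα]))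
      h₃ hne₃ rfl rfl rfl rfl rfl rfl
  exact (hchain .α (.refl _)).symm.trans (hchain a ha)

theorem hRel_α_of_leftCompat (lc : LeftCompat k V4 (I19 k)) (a : Arr v1 v2)
    (ha : HRel k V4 (I19 k) pαγ ⟨v1, v3, (Path.nil.cons a).cons Arr.γ⟩) :
    HRel k V4 (I19 k) (arrowPath .α) (arrowPath a) := by
  have h₃ : geSigmaNu k V4 (I19 k) (cls k e₂) (cls k pαγ) :=
    geSigmaNu_mk _ (arrowPath .α) pγ rfl rfl (.refl _)
  have hne₃ : cls k e₂ ≠ cls k pαγ := cls_ne_cls k (by decide) (by decide)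
  have hchain (b : Arr v1 v2)
      (hb : HRel k V4 (I19 k) pαγ ⟨v1, v3, (Path.nil.cons b).cons Arr.γ⟩) :
      HRel k V4 (I19 k) (lc.v _ _ h₃ hne₃) (arrowPath b) := by
    have h₁ : geSigmaNu k V4 (I19 k) (cls k e₂) (cls k (arrowPath b)) :=
      geSigmaNu_mk _ (arrowPath b) e₂ rfl rfl (.refl _)
    have h₂ : geSigmaNu k V4 (I19 k) (cls k (arrowPath b)) (cls k pαγ) :=
      geSigmaNu_mk _ e₁ pγ rfl rfl hb
    exact lc.hRel_v_of_chain pathLen_eq_zero_of_fst_eq_snd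
      h₁ (cls_ne_cls k (by decide) (by simp [pathLen]))
      h₂ (cls_ne_cls k (by simp [pathLen]) (by simp [pathLen, pαγ]))
      h₃ hne₃ rfl rfl rfl rfl rfl rfl
  exact (hchain .α (.refl _)).symm.trans (hchain a ha)

end V4

/-- For the quiver `0 →δ 1 ⇉(α,β) 2 →γ 3` with
`I = ⟨δ(α−β), (α−β)γ⟩`, the presentation `(Q, I)` is neither right nor left
compatible. -/
theorem not_rightCompat_and_not_leftCompat :
    ¬ Nonempty (RightCompat k V4 (I19 k)) ∧ ¬ Nonempty (LeftCompat k V4 (I19 k)) :=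
  ⟨fun ⟨rc⟩ => V4.not_hRel_α_β k (V4.hRel_α_of_rightCompat k rc .β (V4.hRel_pδα_pδβ k)),
    fun ⟨lc⟩ => V4.not_hRel_α_β k (V4.hRel_α_of_leftCompat k lc .β (V4.hRel_pαγ_pβγ k))⟩
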